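/- arXiv:2507.12733 — 6 statements merged into one kernel-verified Lean document; each statement's English description precedes it below -/
import Mathlib

section
/- Define F₂₀ : [0,1] → ℝ by F₂₀(x) = 0 for 0 ≤ x ≤ 1/3, F₂₀(x) = (3x−1)(x+1)/(3x²) for 1/3 < x ≤ 1/2, and F₂₀(x) = 1 for 1/2 < x ≤ 1. Then F₂₀ is nondecreasing with values in [0,1]; for every x ∈ (1/3, 1/2] the quantile q(x) := 1 − F₂₀(x) equals (1−2x)/(3x²) and satisfies x·q(x) = (−1 + √(1 + 3·q(x)))/3; the function q ↦ (−1 + √(1+3q))/3 is concave on [0,1]; and max_{p ∈ [0,1]} p·(1 − F₂₀(p)) = 1/3, attained at p = 1/3. -/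
open Set

/-- The baseline CDF `F₂₀` of the second regular buyer. -/
noncomputable def F₂₀ : ℝ → ℝ := fun x =>
  if x ≤ 1/3 then 0 else if x ≤ 1/2 then (3*x - 1)*(x + 1)/(3*x^2) else 1

/-!
Only the middle piece of `F₂₀` carries content. There the quantile is `q = (1 - 2x)/(3x²)`, so
`1 + 3q = ((1 - x)/x)²` and the revenue `x q = (1 - 2x)/(3x)` is `(-1 + √(1 + 3q))/3`, a concave
function of `q` (a square root precomposed with an affine map). The revenue is `x` below `1/3`,
`(1 - 2x)/(3x) ≤ 1/3` on `(1/3, 1/2]` and `0` above `1/2`, so its maximum `1/3` is attained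
at `1/3`.
-/

theorem F₂₀_of_le_third {x : ℝ} (hx : x ≤ 1/3) : F₂₀ x = 0 := by
  simp only [F₂₀, if_pos hx]

theorem F₂₀_of_mem_Ioc {x : ℝ} (hx : x ∈ Ioc (1/3 : ℝ) (1/2)) :
    F₂₀ x = (3*x - 1)*(x + 1)/(3*x^2) := by
  simp only [F₂₀, if_neg (not_le.2 hx.1), if_pos hx.2]

theorem F₂₀_of_half_lt {x : ℝ} (hx : 1/2 < x) : F₂₀ x = 1 := by
  simp only [F₂₀, if_neg (not_le.2 ((by norm_num : (1/3 : ℝ) < 1/2).trans hx)),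
    if_neg (not_le.2 hx)]

theorem one_sub_F₂₀_of_mem_Ioc {x : ℝ} (hx : x ∈ Ioc (1/3 : ℝ) (1/2)) :
    1 - F₂₀ x = (1 - 2*x)/(3*x^2) := by
  have hx₀ : x ≠ 0 := by linarith [hx.1]
  rw [F₂₀_of_mem_Ioc hx]
  field_simp
  ring

theorem F₂₀_mem_Icc (x : ℝ) : F₂₀ x ∈ Icc (0:ℝ) 1 := by
  rcases le_or_gt x (1/3) with hx | hx
  · simp [F₂₀_of_le_third hx]
  rcases le_or_gt x (1/2) with hx' | hx'
  · have hq := one_sub_F₂₀_of_mem_Ioc ⟨hx, hx'⟩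
    have hq_nonneg : 0 ≤ (1 - 2*x)/(3*x^2) := div_nonneg (by linarith) (by positivity)
    have hq_le : (1 - 2*x)/(3*x^2) ≤ 1 := by
      rw [div_le_one (by positivity)]
      nlinarith
    constructor <;> linarith
  · simp [F₂₀_of_half_lt hx']

theorem antitoneOn_quantile : AntitoneOn (fun x : ℝ => (1 - 2*x)/(3*x^2)) (Ioc 0 (1/2)) := by
  intro a ha b hb hab
  simp only
  rw [div_le_div_iff₀ (by nlinarith [hb.1]) (by nlinarith [ha.1])]
  nlinarith [mul_nonneg (sub_nonneg.2 hab) (by nlinarith [ha.1, hb.2] : (0:ℝ) ≤ a + b - 2*a*b)]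

theorem monotone_F₂₀ : Monotone F₂₀ := by
  intro a b hab
  rcases le_or_gt a (1/3) with ha | ha
  · rw [F₂₀_of_le_third ha]
    exact (F₂₀_mem_Icc b).1
  rcases lt_or_ge (1/2) b with hb | hb
  · rw [F₂₀_of_half_lt hb]
    exact (F₂₀_mem_Icc a).2
  have hqa := one_sub_F₂₀_of_mem_Ioc ⟨ha, hab.trans hb⟩
  have hqb := one_sub_F₂₀_of_mem_Ioc ⟨ha.trans_le hab, hb⟩
  have hq := antitoneOn_quantile ⟨by linarith, hab.trans hb⟩ ⟨by linarith, hb⟩ hab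
  simp only at hq
  linarith

theorem sqrt_one_add_three_mul_quantile {x : ℝ} (hx : x ∈ Ioc (0:ℝ) 1) :
    Real.sqrt (1 + 3*((1 - 2*x)/(3*x^2))) = (1 - x)/x := by
  have hx₀ : x ≠ 0 := hx.1.ne'
  have hsq : 1 + 3*((1 - 2*x)/(3*x^2)) = ((1 - x)/x)^2 := by
    field_simp
    ring
  rw [hsq, Real.sqrt_sq (div_nonneg (by linarith [hx.2]) hx.1.le)]

theorem mul_quantile_eq {x : ℝ} (hx : x ∈ Ioc (0:ℝ) 1) :
    x * ((1 - 2*x)/(3*x^2)) = (-1 + Real.sqrt (1 + 3*((1 - 2*x)/(3*x^2))))/3 := by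
  have hx₀ : x ≠ 0 := hx.1.ne'
  rw [sqrt_one_add_three_mul_quantile hx]
  field_simp
  ring

theorem concaveOn_sqrt_one_add_mul (c : ℝ) :
    ConcaveOn ℝ {q : ℝ | 0 ≤ 1 + c * q} (fun q => Real.sqrt (1 + c * q)) :=
  (Real.strictConcaveOn_sqrt.concaveOn.translate_right 1).comp_linearMap (LinearMap.mulLeft ℝ c)

theorem concaveOn_neg_one_add_sqrt_one_add_three_mul_div_three :
    ConcaveOn ℝ (Icc (0:ℝ) 1) (fun q => (-1 + Real.sqrt (1 + 3*q))/3) := by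
  have hsub : Icc (0:ℝ) 1 ⊆ {q | 0 ≤ 1 + 3 * q} := fun q hq =>
    show 0 ≤ 1 + 3 * q by linarith [hq.1]
  refine (((concaveOn_sqrt_one_add_mul 3).subset hsub (convex_Icc 0 1)).smul
    (c := (1/3 : ℝ)) (by norm_num) |>.add_const (-1/3)).congr fun q _ => ?_
  simp only [smul_eq_mul, Pi.add_apply]
  ring

theorem revenue_F₂₀_le (p : ℝ) : p * (1 - F₂₀ p) ≤ 1/3 := by
  rcases le_or_gt p (1/3) with hp | hp
  · simpa [F₂₀_of_le_third hp] using hp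
  rcases le_or_gt p (1/2) with hp' | hp'
  · have hp₀ : 0 < p := by linarith
    have hrev : p * (1 - F₂₀ p) = (1 - 2*p)/(3*p) := by
      rw [one_sub_F₂₀_of_mem_Ioc ⟨hp, hp'⟩]
      field_simp
    rw [hrev, div_le_iff₀ (by positivity)]
    linarith
  · simp [F₂₀_of_half_lt hp']

theorem revenue_F₂₀_third : (1/3 : ℝ) * (1 - F₂₀ (1/3)) = 1/3 := by
  rw [F₂₀_of_le_third le_rfl]
  norm_num

theorem stmt1 :
    MonotoneOn F₂₀ (Icc (0:ℝ) 1) ∧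
    (∀ x ∈ Icc (0:ℝ) 1, F₂₀ x ∈ Icc (0:ℝ) 1) ∧
    (∀ x ∈ Ioc (1/3 : ℝ) (1/2),
      1 - F₂₀ x = (1 - 2*x)/(3*x^2) ∧
      x * (1 - F₂₀ x) = (-1 + Real.sqrt (1 + 3*(1 - F₂₀ x)))/3) ∧
    ConcaveOn ℝ (Icc (0:ℝ) 1) (fun q => (-1 + Real.sqrt (1 + 3*q))/3) ∧
    IsGreatest ((fun p => p * (1 - F₂₀ p)) '' Icc (0:ℝ) 1) (1/3) ∧
    (1/3 : ℝ) * (1 - F₂₀ (1/3)) = 1/3 := by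
  refine ⟨monotone_F₂₀.monotoneOn _, fun x _ => F₂₀_mem_Icc x, fun x hx => ?_,
    concaveOn_neg_one_add_sqrt_one_add_three_mul_div_three,
    ⟨⟨1/3, ⟨by norm_num, by norm_num⟩, revenue_F₂₀_third⟩, ?_⟩, revenue_F₂₀_third⟩
  · have hq := one_sub_F₂₀_of_mem_Ioc hx
    refine ⟨hq, ?_⟩
    rw [hq]
    exact mul_quantile_eq ⟨by linarith [hx.1], by linarith [hx.2]⟩
  · rintro _ ⟨p, -, rfl⟩
    exact revenue_F₂₀_le p
end

section
/- Let 0 < ε ≤ 0.09, let p ∈ [0.259, 1/3], and let q ∈ [0,1] satisfy 0 ≤ p − q ≤ ε/3. Then d(p, q) ≤ (2/3)·ε², where d(x,y) = x·log(x/y) + (1−x)·log((1−x)/(1−y)) is the Kullback–Leibler divergence between Bernoulli distributions with means x and y. -/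
/-!
Since `log x ≤ x - 1`, the Bernoulli divergence is bounded by the χ²-divergence
`(p - q)² / (q (1 - q))`. For `p ∈ [0.259, 1/3]` and `0 ≤ p - q ≤ ε/3 ≤ 0.03` we have
`q ∈ [0.229, 1/3]`, where `q (1 - q) ≥ 1/6`; hence `d(p, q) ≤ 6 (ε/3)² = (2/3) ε²`.
-/

open Set

/-- Bernoulli Kullback–Leibler divergence `d(x,y)`. -/
noncomputable def bernKL (x y : ℝ) : ℝ :=
  x * Real.log (x/y) + (1-x) * Real.log ((1-x)/(1-y))

open Real

lemma mul_log_div_le_mul_div_sub_one {a b : ℝ} (ha : 0 ≤ a) (hb : 0 < b) :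
    a * log (a / b) ≤ a * (a / b - 1) := by
  rcases ha.eq_or_lt with rfl | ha
  · simp
  · exact mul_le_mul_of_nonneg_left (log_le_sub_one_of_pos (div_pos ha hb)) ha.le

lemma bernKL_le_sq_div {p q : ℝ} (hp₀ : 0 ≤ p) (hp₁ : p ≤ 1) (hq₀ : 0 < q) (hq₁ : q < 1) :
    bernKL p q ≤ (p - q) ^ 2 / (q * (1 - q)) := by
  have hq₁' : 0 < 1 - q := sub_pos.2 hq₁
  calc bernKL p q ≤ p * (p / q - 1) + (1 - p) * ((1 - p) / (1 - q) - 1) :=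
        add_le_add (mul_log_div_le_mul_div_sub_one hp₀ hq₀)
          (mul_log_div_le_mul_div_sub_one (sub_nonneg.2 hp₁) hq₁')
    _ = (p - q) ^ 2 / (q * (1 - q)) := by
        field_simp
        ring

theorem stmt6_general (ε p q : ℝ) (hε' : ε ≤ 0.09)
    (hp : p ∈ Icc (0.259 : ℝ) (1/3))
    (h1 : 0 ≤ p - q) (h2 : p - q ≤ ε/3) :
    bernKL p q ≤ (2/3) * ε^2 := by
  obtain ⟨hp_lo, hp_hi⟩ := hp
  have hq_lo : (0.229 : ℝ) ≤ q := by linarith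
  have hq_hi : q ≤ 1 / 3 := by linarith
  have hvar : (1 : ℝ) / 6 ≤ q * (1 - q) := by nlinarith
  calc bernKL p q ≤ (p - q) ^ 2 / (q * (1 - q)) :=
        bernKL_le_sq_div (by linarith) (by linarith) (by linarith) (by linarith)
    _ ≤ (ε / 3) ^ 2 / (1 / 6) := by gcongr
    _ = (2 / 3) * ε ^ 2 := by ring

theorem stmt6 (ε p q : ℝ) (hε : 0 < ε) (hε' : ε ≤ 0.09)
    (hp : p ∈ Icc (0.259 : ℝ) (1/3)) (hq : q ∈ Icc (0:ℝ) 1)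
    (h1 : 0 ≤ p - q) (h2 : p - q ≤ ε/3) :
    bernKL p q ≤ (2/3) * ε^2 :=
  stmt6_general ε p q hε' hp h1 h2
end

section
/- Let a ∈ [1, 2] and b ∈ (0, 0.1], and define F(x) = (3x−1)(x+a)(x+b)/(3x³). Then for every x ∈ [1/3, 1]: 2·F'(x)² + (1 − F(x))·F''(x) ≥ 0. -/
/-!
Substituting `t = 1/x` turns `F` into the cubic polynomial `P(t) = (3 - t)(1 + a t)(1 + b t) / 3`.
The chain rule gives `F' = -t² P'(t)` and `F'' = t³ (2 P'(t) + t P''(t))`, and the regularity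
expression collapses to `(2/9) t⁶ (A + B t + C t²)` with
`A = (a + b - 3ab)² + ab(3a + 3b - 1)`, `B = 3ab(a + b - 3ab)` and `C = 3a²b²`,
all nonnegative as soon as `a ≥ 1/3` and `0 ≤ b ≤ 1/3`.
-/

open Set Filter Topology Polynomial

namespace Polynomial

theorem hasDerivAt_eval_inv (P : ℝ[X]) {x : ℝ} (hx : x ≠ 0) :
    HasDerivAt (fun y => P.eval y⁻¹) (-(x⁻¹ ^ 2 * P.derivative.eval x⁻¹)) x :=
  ((P.hasDerivAt x⁻¹).comp x (hasDerivAt_inv hx)).congr_deriv (by rw [inv_pow]; ring)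

theorem deriv_eval_inv_eventuallyEq (P : ℝ[X]) {x : ℝ} (hx : x ≠ 0) :
    deriv (fun y => P.eval y⁻¹) =ᶠ[𝓝 x] fun y => (-(X ^ 2 * P.derivative)).eval y⁻¹ := by
  filter_upwards [isOpen_ne.mem_nhds hx] with y hy
  simp [(P.hasDerivAt_eval_inv hy).deriv]

theorem deriv_deriv_eval_inv (P : ℝ[X]) {x : ℝ} (hx : x ≠ 0) :
    deriv (deriv fun y => P.eval y⁻¹) x =
      x⁻¹ ^ 3 * (2 * P.derivative.eval x⁻¹ + x⁻¹ * P.derivative.derivative.eval x⁻¹) := by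
  rw [(P.deriv_eval_inv_eventuallyEq hx).deriv_eq, (hasDerivAt_eval_inv _ hx).deriv]
  simp only [derivative_neg, derivative_mul, derivative_X_pow, eval_neg, eval_add, eval_mul,
    eval_X_pow, eval_C]
  push_cast
  ring

end Polynomial

noncomputable def cdfPoly (a b : ℝ) : ℝ[X] :=
  C (1 / 3) * (C 3 - X) * (1 + C a * X) * (1 + C b * X)

theorem cdf_eq_eval_inv (a b : ℝ) {x : ℝ} (hx : x ≠ 0) :
    (3 * x - 1) * (x + a) * (x + b) / (3 * x ^ 3) = (cdfPoly a b).eval x⁻¹ := by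
  simp only [cdfPoly, eval_mul, eval_sub, eval_add, eval_C, eval_X, eval_one]
  field_simp

theorem cdf_eventuallyEq_eval_inv (a b : ℝ) {x : ℝ} (hx : x ≠ 0) :
    (fun y : ℝ => (3 * y - 1) * (y + a) * (y + b) / (3 * y ^ 3)) =ᶠ[𝓝 x]
      fun y => (cdfPoly a b).eval y⁻¹ := by
  filter_upwards [isOpen_ne.mem_nhds hx] with y hy
  exact cdf_eq_eval_inv a b hy

theorem cdfPoly_regularity_nonneg {a b t : ℝ} (ha : 1 / 3 ≤ a) (hb₀ : 0 ≤ b) (hb : b ≤ 1 / 3)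
    (ht : 0 ≤ t) :
    0 ≤ 2 * (-(t ^ 2 * (cdfPoly a b).derivative.eval t)) ^ 2 + (1 - (cdfPoly a b).eval t) *
      (t ^ 3 * (2 * (cdfPoly a b).derivative.eval t +
        t * (cdfPoly a b).derivative.derivative.eval t)) := by
  have closed_form : 2 * (-(t ^ 2 * (cdfPoly a b).derivative.eval t)) ^ 2 + (1 - (cdfPoly a b).eval t) *
      (t ^ 3 * (2 * (cdfPoly a b).derivative.eval t +
        t * (cdfPoly a b).derivative.derivative.eval t)) =
      2 / 9 * t ^ 6 * (((a + b - 3 * a * b) ^ 2 + a * b * (3 * a + 3 * b - 1)) +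
        3 * a * b * (a + b - 3 * a * b) * t + 3 * a ^ 2 * b ^ 2 * t ^ 2) := by
    simp only [cdfPoly, derivative_mul, derivative_sub, derivative_add, derivative_C,
      derivative_X, derivative_one, derivative_zero, eval_mul, eval_sub, eval_add, eval_C,
      eval_X, eval_one, eval_zero]
    ring
  have hab : 0 ≤ a + b - 3 * a * b := by nlinarith
  have hab' : 0 ≤ 3 * a + 3 * b - 1 := by linarith
  rw [closed_form]
  positivity

theorem stmt9 (a b : ℝ) (ha : a ∈ Icc (1:ℝ) 2) (hb : b ∈ Ioc (0:ℝ) 0.1) :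
    ∀ x ∈ Icc (1/3 : ℝ) 1,
      0 ≤ 2*(deriv (fun x : ℝ => (3*x-1)*(x+a)*(x+b)/(3*x^3)) x)^2 +
        (1 - (3*x-1)*(x+a)*(x+b)/(3*x^3)) *
          deriv (deriv (fun x : ℝ => (3*x-1)*(x+a)*(x+b)/(3*x^3))) x := by
  intro x hx
  have hx_pos : 0 < x := by linarith [hx.1]
  have hx₀ := hx_pos.ne'
  have hF := cdf_eventuallyEq_eval_inv a b hx₀
  rw [hF.deriv_eq, hF.deriv.deriv_eq, (hasDerivAt_eval_inv _ hx₀).deriv,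
    deriv_deriv_eval_inv _ hx₀, cdf_eq_eval_inv a b hx₀]
  exact cdfPoly_regularity_nonneg (by linarith [ha.1]) hb.1.le (by linarith [hb.2])
    (inv_nonneg.mpr hx_pos.le)
end

section
/- Let a ∈ [1, 2], b ∈ (0, 0.1], and x ∈ [1/3, 1]. Then h(x) := a²x² + abx·((1−3a)x + 3a) + b²·((1 − 3a + 9a²)x² + (3a − 9a²)x + 3a²) ≥ 0. Moreover, with P = 3a+3b−1, Q = 3ab−a−b, R = ab, one has h(x) = (PR + Q²)x² − 3QR·x + 3R² (since PR + Q² = a² + b² + ab − 3a²b − 3ab² + 9a²b², QR = 3a²b² − a²b − ab², and R² = a²b²). -/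
/-! Writing `h(x) = (PR + Q²)x² - 3QR·x + 3R²`, each of the three terms is nonnegative once
`P, R, x ≥ 0` and `Q ≤ 0`: then `PR + Q² ≥ 0` and `-3QR ≥ 0`. For `a ≥ 1` and `0 < b ≤ 1/3`
these sign conditions hold, since `Q = 3ab - a - b ≤ -b` follows from `3b ≤ 1`. -/

open Set

lemma quadratic_nonneg_of_sign_conditions {P Q R x : ℝ} (hP : 0 ≤ P) (hQ : Q ≤ 0)
    (hR : 0 ≤ R) (hx : 0 ≤ x) : 0 ≤ (P*R + Q^2)*x^2 - 3*Q*R*x + 3*R^2 := by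
  have hquad : 0 ≤ (P*R + Q^2)*x^2 := by positivity
  have hlin : 0 ≤ -Q*R*x := mul_nonneg (mul_nonneg (neg_nonneg.mpr hQ) hR) hx
  linarith [sq_nonneg R]

lemma h_eq_quadratic (a b x : ℝ) :
    a^2*x^2 + a*b*x*((1 - 3*a)*x + 3*a) +
        b^2*((1 - 3*a + 9*a^2)*x^2 + (3*a - 9*a^2)*x + 3*a^2) =
      ((3*a + 3*b - 1)*(a*b) + (3*a*b - a - b)^2)*x^2
        - 3*(3*a*b - a - b)*(a*b)*x + 3*(a*b)^2 := by
  ring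

theorem stmt11 (a b x : ℝ) (ha : a ∈ Icc (1:ℝ) 2) (hb : b ∈ Ioc (0:ℝ) 0.1)
    (hx : x ∈ Icc (1/3 : ℝ) 1) (P Q R : ℝ)
    (hP : P = 3*a + 3*b - 1) (hQ : Q = 3*a*b - a - b) (hR : R = a*b) :
    0 ≤ a^2*x^2 + a*b*x*((1 - 3*a)*x + 3*a) +
        b^2*((1 - 3*a + 9*a^2)*x^2 + (3*a - 9*a^2)*x + 3*a^2) ∧
    a^2*x^2 + a*b*x*((1 - 3*a)*x + 3*a) +
        b^2*((1 - 3*a + 9*a^2)*x^2 + (3*a - 9*a^2)*x + 3*a^2) =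
      (P*R + Q^2)*x^2 - 3*Q*R*x + 3*R^2 ∧
    P*R + Q^2 = a^2 + b^2 + a*b - 3*a^2*b - 3*a*b^2 + 9*a^2*b^2 ∧
    Q*R = 3*a^2*b^2 - a^2*b - a*b^2 ∧
    R^2 = a^2*b^2 := by
  obtain ⟨ha1, -⟩ := ha
  obtain ⟨hb0, hb1⟩ := hb
  norm_num at hb1
  subst hP hQ hR
  rw [h_eq_quadratic]
  have hQ_nonpos : 3*a*b - a - b ≤ 0 := by nlinarith
  refine ⟨?_, rfl, by ring, by ring, by ring⟩
  exact quadratic_nonneg_of_sign_conditions (by linarith) hQ_nonpos (by positivity)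
    (by linarith [hx.1])
end

section
/- Let a ∈ [1, 2] and b ∈ (0, 0.1], and define c = (a + b − 3ab + √((3ab + a + b)² − 4ab))/(2·(3(a+b) − 1)). Then: (i) (3(a+b) − 1)·c² + (3ab − a − b)·c − ab = 0, and consequently c·(1 − c²/((c+a)(c+b))) = 1/3; (ii) a/(3(a+b) − 1) ≤ c; and (iii) 0 ≤ a/(3a−1) − c ≤ 3ab/(3a−1)² ≤ b. -/
/-!
The price `c` is the positive root of `q(x) = (3(a+b) - 1) x² + (3ab - a - b) x - ab`, and the
revenue equation is `q(c) = 0` with denominators cleared. Since `q(0) = -ab < 0`, the other root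
of `q` is negative, so for `t ≥ 0` we have `t ≤ c` exactly when `q(t) ≤ 0`. Each bound on `c` is
therefore the sign of `q` at an explicit point, which is a rational function of `a` and `b`.
-/

open Set

noncomputable def quadraticPosRoot (A B C : ℝ) : ℝ := (-B + √(B ^ 2 + 4 * A * C)) / (2 * A)

section QuadraticPosRoot

variable {A B C : ℝ}

theorem quadraticPosRoot_isRoot (hA : 0 < A) (hD : 0 ≤ B ^ 2 + 4 * A * C) :
    A * quadraticPosRoot A B C ^ 2 + B * quadraticPosRoot A B C - C = 0 := by
  have hs := Real.sq_sqrt hD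
  unfold quadraticPosRoot
  generalize √(B ^ 2 + 4 * A * C) = s at hs
  field_simp
  linear_combination hs

theorem quadraticPosRoot_pos (hA : 0 < A) (hC : 0 < C) : 0 < quadraticPosRoot A B C := by
  have hB : B < √(B ^ 2 + 4 * A * C) :=
    (le_abs_self B).trans_lt ((Real.lt_sqrt (abs_nonneg B)).2 (by rw [sq_abs]; nlinarith))
  exact div_pos (by linarith) (by linarith)

end QuadraticPosRoot

section RootComparison

variable {A B C c t : ℝ}

theorem mul_eval_eq_sub_mul_of_isRoot (hc : A * c ^ 2 + B * c - C = 0) :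
    c * (A * t ^ 2 + B * t - C) = (t - c) * (A * c * t + C) := by
  linear_combination t * hc

theorem le_of_isRoot_of_eval_nonpos (hA : 0 < A) (hC : 0 < C) (hc0 : 0 < c)
    (hc : A * c ^ 2 + B * c - C = 0) (ht : 0 ≤ t) (hq : A * t ^ 2 + B * t - C ≤ 0) : t ≤ c := by
  have hP : 0 < A * c * t + C := by positivity
  have h : (t - c) * (A * c * t + C) ≤ 0 := by
    rw [← mul_eval_eq_sub_mul_of_isRoot hc]
    exact mul_nonpos_of_nonneg_of_nonpos hc0.le hq
  exact sub_nonpos.1 (nonpos_of_mul_nonpos_left h hP)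

theorem isRoot_le_of_eval_nonneg (hA : 0 < A) (hC : 0 < C) (hc0 : 0 < c)
    (hc : A * c ^ 2 + B * c - C = 0) (ht : 0 ≤ t) (hq : 0 ≤ A * t ^ 2 + B * t - C) : c ≤ t := by
  have hP : 0 < A * c * t + C := by positivity
  have h : 0 ≤ (t - c) * (A * c * t + C) := by
    rw [← mul_eval_eq_sub_mul_of_isRoot hc]
    exact mul_nonneg hc0.le hq
  exact sub_nonneg.1 (nonneg_of_mul_nonneg_left h hP)

end RootComparison

section ThreeBuyers

variable {a b c : ℝ}

theorem revenue_eq_third_of_isRoot (hca : c + a ≠ 0) (hcb : c + b ≠ 0)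
    (hc : (3 * (a + b) - 1) * c ^ 2 + (3 * a * b - a - b) * c - a * b = 0) :
    c * (1 - c ^ 2 / ((c + a) * (c + b))) = 1 / 3 := by
  field_simp
  linear_combination hc

theorem div_le_of_isRoot (ha : 0 < a) (hb : 0 < b) (hA : 0 < 3 * (a + b) - 1) (hc0 : 0 < c)
    (hc : (3 * (a + b) - 1) * c ^ 2 + (3 * a * b - a - b) * c - a * b = 0) :
    a / (3 * (a + b) - 1) ≤ c := by
  refine le_of_isRoot_of_eval_nonpos hA (by positivity) hc0 hc (by positivity) ?_
  have hq : (3 * (a + b) - 1) * (a / (3 * (a + b) - 1)) ^ 2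
      + (3 * a * b - a - b) * (a / (3 * (a + b) - 1)) - a * b
      = -(3 * a * b ^ 2 / (3 * (a + b) - 1)) := by
    field_simp
    ring
  rw [hq, neg_nonpos]
  positivity

theorem le_div_of_isRoot (ha : 0 < a) (hb : 0 < b) (hu : 0 < 3 * a - 1) (hc0 : 0 < c)
    (hc : (3 * (a + b) - 1) * c ^ 2 + (3 * a * b - a - b) * c - a * b = 0) :
    c ≤ a / (3 * a - 1) := by
  refine isRoot_le_of_eval_nonneg (by linarith) (by positivity) hc0 hc (by positivity) ?_
  have hq : (3 * (a + b) - 1) * (a / (3 * a - 1)) ^ 2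
      + (3 * a * b - a - b) * (a / (3 * a - 1)) - a * b = 3 * a ^ 2 * b / (3 * a - 1) ^ 2 := by
    field_simp
    ring
  rw [hq]
  positivity

theorem div_sub_le_of_isRoot (ha : 0 < a) (hb : 0 < b) (hbu : 3 * b ≤ 3 * a - 1) (hc0 : 0 < c)
    (hc : (3 * (a + b) - 1) * c ^ 2 + (3 * a * b - a - b) * c - a * b = 0) :
    a / (3 * a - 1) - 3 * a * b / (3 * a - 1) ^ 2 ≤ c := by
  set u := 3 * a - 1
  have hu : 0 < u := by linarith
  have ht : a / u - 3 * a * b / u ^ 2 = a * (u - 3 * b) / u ^ 2 := by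
    field_simp
  rw [ht]
  refine le_of_isRoot_of_eval_nonpos (by linarith) (by positivity) hc0 hc
    (div_nonneg (mul_nonneg ha.le (by linarith)) (sq_nonneg u)) ?_
  have hq : (3 * (a + b) - 1) * (a * (u - 3 * b) / u ^ 2) ^ 2
      + (3 * a * b - a - b) * (a * (u - 3 * b) / u ^ 2) - a * b
      = -(3 * a * b ^ 2 * (u ^ 3 + 3 * a * (u - 3 * b)) / u ^ 4) := by
    field_simp
    ring
  rw [hq, neg_nonpos]
  have : 0 ≤ u - 3 * b := by linarith
  positivity

theorem mul_div_sq_le (ha : 1 ≤ a) (hb : 0 ≤ b) : 3 * a * b / (3 * a - 1) ^ 2 ≤ b := by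
  rw [div_le_iff₀ (by nlinarith)]
  have : 0 ≤ 9 * a * (a - 1) + 1 := by nlinarith
  nlinarith [mul_nonneg hb this]

end ThreeBuyers

theorem stmt12 (a b : ℝ) (ha : a ∈ Icc (1:ℝ) 2) (hb : b ∈ Ioc (0:ℝ) 0.1)
    (c : ℝ)
    (hc : c = (a + b - 3*a*b + Real.sqrt ((3*a*b + a + b)^2 - 4*a*b)) / (2*(3*(a+b) - 1))) :
    ((3*(a+b) - 1)*c^2 + (3*a*b - a - b)*c - a*b = 0 ∧
      c * (1 - c^2/((c+a)*(c+b))) = 1/3) ∧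
    a/(3*(a+b) - 1) ≤ c ∧
    (0 ≤ a/(3*a - 1) - c ∧ a/(3*a - 1) - c ≤ 3*a*b/(3*a - 1)^2 ∧ 3*a*b/(3*a - 1)^2 ≤ b) := by
  obtain ⟨ha1, -⟩ := ha
  obtain ⟨hb0, hb1⟩ := hb
  norm_num at hb1
  have hA : 0 < 3 * (a + b) - 1 := by linarith
  have hc_root : c = quadraticPosRoot (3 * (a + b) - 1) (3 * a * b - a - b) (a * b) := by
    have hD : (3 * a * b + a + b) ^ 2 - 4 * a * b
        = (3 * a * b - a - b) ^ 2 + 4 * (3 * (a + b) - 1) * (a * b) := by ring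
    rw [hc, quadraticPosRoot, hD]
    congr 1
    ring
  have hc0 : 0 < c := hc_root ▸ quadraticPosRoot_pos hA (by positivity)
  have hroot : (3 * (a + b) - 1) * c ^ 2 + (3 * a * b - a - b) * c - a * b = 0 :=
    hc_root ▸ quadraticPosRoot_isRoot hA (by nlinarith)
  refine ⟨⟨hroot, revenue_eq_third_of_isRoot (by positivity) (by positivity) hroot⟩,
    div_le_of_isRoot (by linarith) hb0 hA hc0 hroot, ?_, ?_, mul_div_sq_le ha1 hb0.le⟩
  · exact sub_nonneg.2 (le_div_of_isRoot (by linarith) hb0 (by linarith) hc0 hroot)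
  · linarith [div_sub_le_of_isRoot (by linarith) hb0 (by linarith) hc0 hroot]
end

section
/- Let a > 0 and define F(x) = (3x−1)(x+a)/(3x²) for x > 0. Then for every x > 0: 2·F'(x)² + (1 − F(x))·F''(x) = 2a²/(9x⁶). In particular 2F'(x)² + (1−F(x))F''(x) > 0 for all x > 0, so F satisfies the regularity differential inequality wherever it is defined. -/
/-!
Writing `F x = 1 + b / x + c / x ^ 2` with `b = (3a - 1) / 3` and `c = -a / 3`, the terms in `b ^ 2`
and `b c` cancel in `2 F' ^ 2 + (1 - F) F''`, which leaves `2 c ^ 2 / x ^ 6 = 2 a ^ 2 / (9 x ^ 6)`.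
-/

open Filter Topology

/-- The left-hand side of Myerson's regularity condition `2 F' ^ 2 + (1 - F) F'' ≥ 0`. -/
noncomputable def regularityExpr (F : ℝ → ℝ) (x : ℝ) : ℝ :=
  2 * deriv F x ^ 2 + (1 - F x) * deriv (deriv F) x

theorem regularityExpr_congr {F G : ℝ → ℝ} {x : ℝ} (h : F =ᶠ[𝓝 x] G) :
    regularityExpr F x = regularityExpr G x := by
  rw [regularityExpr, regularityExpr, h.eq_of_nhds, h.deriv_eq, h.deriv.deriv_eq]

section InverseQuadratic

variable (b c : ℝ) {x : ℝ}

theorem hasDerivAt_one_add_div_add_div_sq (hx : x ≠ 0) :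
    HasDerivAt (fun y => 1 + b / y + c / y ^ 2) (-b / x ^ 2 - 2 * c / x ^ 3) x := by
  have h₁ := (hasDerivAt_const x b).div (hasDerivAt_id x) hx
  have h₂ := (hasDerivAt_const x c).div (hasDerivAt_pow 2 x) (pow_ne_zero 2 hx)
  refine ((h₁.const_add 1).add h₂).congr_deriv ?_
  simp only [id]
  field_simp
  ring

theorem hasDerivAt_neg_div_sq_sub_div_cube (hx : x ≠ 0) :
    HasDerivAt (fun y => -b / y ^ 2 - 2 * c / y ^ 3) (2 * b / x ^ 3 + 6 * c / x ^ 4) x := by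
  have h₂ := (hasDerivAt_const x (-b)).div (hasDerivAt_pow 2 x) (pow_ne_zero 2 hx)
  have h₃ := (hasDerivAt_const x (2 * c)).div (hasDerivAt_pow 3 x) (pow_ne_zero 3 hx)
  refine (h₂.sub h₃).congr_deriv ?_
  field_simp
  ring

theorem regularityExpr_one_add_div_add_div_sq (hx : x ≠ 0) :
    regularityExpr (fun y => 1 + b / y + c / y ^ 2) x = 2 * c ^ 2 / x ^ 6 := by
  have hderiv : deriv (fun y => 1 + b / y + c / y ^ 2)
      =ᶠ[𝓝 x] fun y => -b / y ^ 2 - 2 * c / y ^ 3 := by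
    filter_upwards [isOpen_ne.mem_nhds hx] with y hy
    exact (hasDerivAt_one_add_div_add_div_sq b c hy).deriv
  rw [regularityExpr, hderiv.deriv_eq, (hasDerivAt_neg_div_sq_sub_div_cube b c hx).deriv,
    (hasDerivAt_one_add_div_add_div_sq b c hx).deriv]
  field_simp
  ring

end InverseQuadratic

theorem baselineCDF_eventuallyEq (a : ℝ) {x : ℝ} (hx : x ≠ 0) :
    (fun y : ℝ => (3 * y - 1) * (y + a) / (3 * y ^ 2))
      =ᶠ[𝓝 x] fun y => 1 + (3 * a - 1) / 3 / y + -a / 3 / y ^ 2 := by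
  filter_upwards [isOpen_ne.mem_nhds hx] with y hy
  field_simp
  ring

theorem stmt15 (a : ℝ) (ha : 0 < a) :
    ∀ x : ℝ, 0 < x →
      2*(deriv (fun x : ℝ => (3*x-1)*(x+a)/(3*x^2)) x)^2 +
        (1 - (3*x-1)*(x+a)/(3*x^2)) *
          deriv (deriv (fun x : ℝ => (3*x-1)*(x+a)/(3*x^2))) x = 2*a^2/(9*x^6) ∧
      0 < 2*(deriv (fun x : ℝ => (3*x-1)*(x+a)/(3*x^2)) x)^2 +
        (1 - (3*x-1)*(x+a)/(3*x^2)) *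
          deriv (deriv (fun x : ℝ => (3*x-1)*(x+a)/(3*x^2))) x := by
  intro x hx
  have key : regularityExpr (fun x : ℝ => (3*x-1)*(x+a)/(3*x^2)) x = 2*a^2/(9*x^6) := by
    rw [regularityExpr_congr (baselineCDF_eventuallyEq a hx.ne'),
      regularityExpr_one_add_div_add_div_sq _ _ hx.ne']
    ring
  refine ⟨key, ?_⟩
  rw [← regularityExpr, key]
  positivity
end
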